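/- arXiv:1109.4022 — 5 statements merged into one kernel-verified Lean document; each statement's English description precedes it below -/
import Mathlib

section
/- For all N ≥ 1 and all z_1,…,z_N ∈ ℂ with z_k = x_k + iy_k, the following exact identity holds: |Ψ_N(z_1,…,z_N)|² = (N!)^{−1}·(2πRℓ√π)^{−N}·∏_{1≤j<k≤N} |1 − exp((z_j − z_k)/R)|^{2p}·exp(−(1/ℓ²)·Σ_{k=1}^N (x_k − (k−1)·pℓ²/R)²). -/
open MeasureTheory Filter Finset

noncomputable section

/-- The normalization constant `κ_N` of Laughlin's wave function. -/
def kappa (R ℓ : ℝ) (p N : ℕ) : ℝ :=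
  (N.factorial : ℝ) ^ (-(1/2 : ℝ)) *
    (2 * Real.pi * R * ℓ * Real.sqrt Real.pi) ^ (-(N : ℝ) / 2) *
    Real.exp (-((p : ℝ)^2 * (ℓ/R)^2 / 2) * ∑ j ∈ Finset.range N, (j : ℝ)^2)

/-- Laughlin's wave function on the cylinder of radius `R`, with magnetic length `ℓ`
and filling factor `1/p`. -/
def Psi (R ℓ : ℝ) (p N : ℕ) (z : Fin N → ℂ) : ℂ :=
  (kappa R ℓ p N : ℂ) *
    (∏ jk ∈ Finset.univ.filter (fun jk : Fin N × Fin N => jk.1 < jk.2),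
      (Complex.exp (z jk.2 / (R : ℂ)) - Complex.exp (z jk.1 / (R : ℂ))) ^ p) *
    ((Real.exp (-(1/(2*ℓ^2)) * ∑ k, (z k).re ^ 2) : ℝ) : ℂ)

/-- The infinite cylinder `𝒵 = ℝ × [0, 2πR]`, as a subset of `ℂ`. -/
def cylZ (R : ℝ) : Set ℂ := {z : ℂ | 0 ≤ z.im ∧ z.im ≤ 2 * Real.pi * R}

/-- `‖Ψ_N‖²_Λ`. -/
def normSqOn (R ℓ : ℝ) (p N : ℕ) (Λ : Set ℂ) : ℝ :=
  ∫ z : Fin N → ℂ, ‖Psi R ℓ p N z‖ ^ 2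
    ∂(Measure.pi fun _ : Fin N => volume.restrict Λ)

/-- `C_N = ‖Ψ_N‖²_𝒵`. -/
def CN (R ℓ : ℝ) (p : ℕ) (N : ℕ) : ℝ := normSqOn R ℓ p N (cylZ R)

/-!
Each pair factor splits as `e^{z_k/R} - e^{z_j/R} = e^{z_k/R} (1 - e^{(z_j - z_k)/R})`. Over the
pairs `j < k` the moduli of the prefactors multiply to `exp (Σ_k k x_k / R)`, because `k` is the
second coordinate of exactly `k` pairs. Raised to the power `2p`, and together with the Gaussian and
the factor `exp (-p²γ² Σ_k k²)` of `κ_N²`, this completes the square around `x_k = k p ℓ² / R`.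
-/

theorem Fin.sum_filter_fst_lt_snd {M : Type*} [AddCommMonoid M] {N : ℕ} (f : Fin N → M) :
    ∑ jk ∈ univ.filter (fun jk : Fin N × Fin N => jk.1 < jk.2), f jk.2
      = ∑ k : Fin N, (k : ℕ) • f k := by
  rw [sum_filter, ← univ_product_univ, sum_product, sum_comm]
  refine sum_congr rfl fun k _ => ?_
  rw [← sum_filter]
  dsimp only
  rw [Finset.sum_const, filter_gt_eq_Iio, Fin.card_Iio]

theorem sum_sub_mul_sq {ι : Type*} (s : Finset ι) (x a : ι → ℝ) (c : ℝ) :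
    ∑ i ∈ s, (x i - a i * c) ^ 2
      = ∑ i ∈ s, x i ^ 2 - 2 * c * ∑ i ∈ s, a i * x i + c ^ 2 * ∑ i ∈ s, a i ^ 2 := by
  simp only [mul_sum, ← sum_sub_distrib, ← sum_add_distrib]
  exact sum_congr rfl fun i _ => by ring

theorem Complex.exp_sub_exp_eq_mul (a b : ℂ) :
    Complex.exp a - Complex.exp b = Complex.exp a * (1 - Complex.exp (b - a)) := by
  rw [mul_sub, mul_one, ← Complex.exp_add, add_sub_cancel]

theorem prod_norm_exp_div_sub_exp_div_pow (R : ℝ) {N : ℕ} (z : Fin N → ℂ) (m : ℕ) :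
    ∏ jk ∈ univ.filter (fun jk : Fin N × Fin N => jk.1 < jk.2),
        ‖Complex.exp (z jk.2 / R) - Complex.exp (z jk.1 / R)‖ ^ m
      = Real.exp (m * ∑ k : Fin N, (k : ℕ) * (z k).re / R) *
        ∏ jk ∈ univ.filter (fun jk : Fin N × Fin N => jk.1 < jk.2),
          ‖1 - Complex.exp ((z jk.1 - z jk.2) / R)‖ ^ m := by
  simp only [Complex.exp_sub_exp_eq_mul, sub_div, norm_mul, Complex.norm_exp,
    Complex.div_ofReal_re, mul_pow, prod_mul_distrib, prod_pow, ← Real.exp_sum, ← Real.exp_nat_mul]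
  rw [← mul_sum, Fin.sum_filter_fst_lt_snd fun k => (z k).re / R]
  simp only [nsmul_eq_mul, mul_div_assoc]

theorem sq_rpow_div_two {x : ℝ} (hx : 0 ≤ x) (a : ℝ) : (x ^ (a / 2)) ^ 2 = x ^ a := by
  rw [← Real.rpow_natCast, ← Real.rpow_mul hx]; norm_num

theorem kappa_sq {R ℓ : ℝ} (h : 0 ≤ R * ℓ) (p N : ℕ) :
    kappa R ℓ p N ^ 2 = (N.factorial : ℝ)⁻¹ * ((2 * Real.pi * R * ℓ * Real.sqrt Real.pi) ^ N)⁻¹ *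
      Real.exp (-((p : ℝ) ^ 2 * (ℓ / R) ^ 2) * ∑ j ∈ range N, (j : ℝ) ^ 2) := by
  have hbase : 0 ≤ 2 * Real.pi * R * ℓ * Real.sqrt Real.pi := by
    rw [mul_assoc _ R]; positivity
  have hfact : ((N.factorial : ℝ) ^ (-(1 / 2 : ℝ))) ^ 2 = (N.factorial : ℝ)⁻¹ := by
    rw [show -(1 / 2 : ℝ) = -1 / 2 by norm_num, sq_rpow_div_two (by positivity), Real.rpow_neg_one]
  have hpow : ((2 * Real.pi * R * ℓ * Real.sqrt Real.pi) ^ (-(N : ℝ) / 2)) ^ 2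
      = ((2 * Real.pi * R * ℓ * Real.sqrt Real.pi) ^ N)⁻¹ := by
    rw [sq_rpow_div_two hbase, Real.rpow_neg hbase, Real.rpow_natCast]
  rw [kappa, mul_pow, mul_pow, hfact, hpow, ← Real.exp_nat_mul]
  congr 2
  push_cast
  ring

theorem norm_Psi_sq (R ℓ : ℝ) (p N : ℕ) (z : Fin N → ℂ) :
    ‖Psi R ℓ p N z‖ ^ 2 = kappa R ℓ p N ^ 2 *
      (∏ jk ∈ univ.filter (fun jk : Fin N × Fin N => jk.1 < jk.2),
        ‖Complex.exp (z jk.2 / R) - Complex.exp (z jk.1 / R)‖ ^ (2 * p)) *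
      Real.exp (-(1 / ℓ ^ 2) * ∑ k, (z k).re ^ 2) := by
  rw [Psi, norm_mul, norm_mul, Complex.norm_real, Complex.norm_real, norm_prod, Real.norm_eq_abs,
    Real.norm_of_nonneg (Real.exp_pos _).le, mul_pow, mul_pow, sq_abs, ← prod_pow, ← Real.exp_nat_mul]
  simp only [norm_pow, ← pow_mul, mul_comm p 2]
  congr 2
  field_simp
  ring

theorem Psi_abs_sq_eq_general (R ℓ : ℝ) (hR : 0 < R) (hl : 0 < ℓ)
    (p : ℕ) (N : ℕ) (z : Fin N → ℂ) :
    ‖Psi R ℓ p N z‖ ^ 2 =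
      (N.factorial : ℝ)⁻¹ * ((2 * Real.pi * R * ℓ * Real.sqrt Real.pi) ^ N)⁻¹ *
        (∏ jk ∈ Finset.univ.filter (fun jk : Fin N × Fin N => jk.1 < jk.2),
          ‖1 - Complex.exp ((z jk.1 - z jk.2) / (R : ℂ))‖ ^ (2 * p)) *
        Real.exp (-(1/ℓ^2) *
          ∑ k : Fin N, ((z k).re - ((k : ℕ) : ℝ) * ((p : ℝ) * ℓ^2 / R)) ^ 2) := by
  rw [norm_Psi_sq, kappa_sq (mul_pos hR hl).le, prod_norm_exp_div_sub_exp_div_pow,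
    sum_sub_mul_sq, ← Fin.sum_univ_eq_sum_range (fun j => (j : ℝ) ^ 2)]
  have hexp : -(1 / ℓ ^ 2) * (∑ k : Fin N, (z k).re ^ 2
        - 2 * (p * ℓ ^ 2 / R) * ∑ k : Fin N, (k : ℕ) * (z k).re
        + (p * ℓ ^ 2 / R) ^ 2 * ∑ k : Fin N, ((k : ℕ) : ℝ) ^ 2)
      = -((p : ℝ) ^ 2 * (ℓ / R) ^ 2) * ∑ k : Fin N, ((k : ℕ) : ℝ) ^ 2
        + ((2 * p : ℕ) : ℝ) * ∑ k : Fin N, (k : ℕ) * (z k).re / R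
        + -(1 / ℓ ^ 2) * ∑ k, (z k).re ^ 2 := by
    rw [← sum_div]
    field_simp
    push_cast
    ring
  rw [hexp, Real.exp_add, Real.exp_add]
  ring

/-- The exact alternative form of `|Ψ_N|²`, exhibiting the period `pℓ²/R` of the
Gaussian along the cylinder axis. -/
theorem Psi_abs_sq_eq (R ℓ : ℝ) (hR : 0 < R) (hl : 0 < ℓ)
    (p : ℕ) (hp : 1 ≤ p) (N : ℕ) (hN : 1 ≤ N) (z : Fin N → ℂ) :
    ‖Psi R ℓ p N z‖ ^ 2 =
      (N.factorial : ℝ)⁻¹ * ((2 * Real.pi * R * ℓ * Real.sqrt Real.pi) ^ N)⁻¹ *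
        (∏ jk ∈ Finset.univ.filter (fun jk : Fin N × Fin N => jk.1 < jk.2),
          ‖1 - Complex.exp ((z jk.1 - z jk.2) / (R : ℂ))‖ ^ (2 * p)) *
        Real.exp (-(1/ℓ^2) *
          ∑ k : Fin N, ((z k).re - ((k : ℕ) : ℝ) * ((p : ℝ) * ℓ^2 / R)) ^ 2) :=
  Psi_abs_sq_eq_general R ℓ hR hl p N z
end
end

section
/- Let p ≥ 1 be an integer, γ > 0 a real number, N, M ≥ 1 integers, x̄ ∈ ℝ, and let x_1,…,x_{N+M} be real numbers such that x_j ≤ x̄ for all j ∈ {1,…,N}, x_k ≥ x̄ for all k ∈ {N+1,…,N+M}, and |x_j − x̄| ≥ |j − N − 1/2|·pγ/2 for every j ∈ {1,…,N+M}. Then Σ_{j=1}^{N} Σ_{k=N+1}^{N+M} ln(1 + exp(−γ·|x_j − x_k|)) ≤ (1 − exp(−pγ²/2))^{−2}. -/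
open Finset

lemma geo_sum_aux {q : ℝ} (hq0 : 0 ≤ q) (hq1 : q < 1) (n : ℕ) :
    ∑ i ∈ Finset.range n, q ^ i ≤ (1 - q)⁻¹ := by
  have h1q : 0 < 1 - q := by linarith
  rw [geom_sum_eq (ne_of_lt hq1)]
  have : (q ^ n - 1) / (q - 1) = (1 - q ^ n) / (1 - q) := by
    rw [← neg_div_neg_eq]; ring_nf
  rw [this, ← one_div]
  have hn := pow_nonneg hq0 n
  gcongr
  linarith

/-- The left–right interaction of a regular configuration is uniformly bounded:
if the particles `1,…,N` lie to the left of `xbar`, the particles `N+1,…,N+M` lie to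
its right, and each particle `j` keeps distance `|j - N - 1/2|·pγ/2` from `xbar`,
then `Σ_{j≤N} Σ_{k>N} ln(1 + e^{-γ|x_j - x_k|}) ≤ (1 - e^{-pγ²/2})⁻²`. -/
theorem left_right_interaction_bound (p : ℕ) (hp : 1 ≤ p) (γ : ℝ) (hγ : 0 < γ)
    (N M : ℕ) (hN : 1 ≤ N) (hM : 1 ≤ M) (xbar : ℝ) (x : ℕ → ℝ)
    (hleft : ∀ j ∈ Finset.Icc 1 N, x j ≤ xbar)
    (hright : ∀ k ∈ Finset.Icc (N + 1) (N + M), xbar ≤ x k)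
    (hdist : ∀ j ∈ Finset.Icc 1 (N + M),
      |(j : ℝ) - (N : ℝ) - 1/2| * ((p : ℝ) * γ) / 2 ≤ |x j - xbar|) :
    ∑ j ∈ Finset.Icc 1 N, ∑ k ∈ Finset.Icc (N + 1) (N + M),
        Real.log (1 + Real.exp (-γ * |x j - x k|))
      ≤ ((1 - Real.exp (-((p : ℝ) * γ^2) / 2)) ^ 2)⁻¹ := by
  set q : ℝ := Real.exp (-((p : ℝ) * γ ^ 2) / 2) with hqdef
  have hp1 : (1 : ℝ) ≤ (p : ℝ) := by exact_mod_cast hp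
  have hq0 : 0 < q := Real.exp_pos _
  have hq1 : q < 1 := by
    rw [hqdef, Real.exp_lt_one_iff]
    have : 0 < (p : ℝ) * γ ^ 2 := by positivity
    linarith
  have h1q : 0 < 1 - q := by linarith
  -- pointwise bound
  have key : ∀ j ∈ Finset.Icc 1 N, ∀ k ∈ Finset.Icc (N + 1) (N + M),
      Real.log (1 + Real.exp (-γ * |x j - x k|)) ≤ q ^ (N + 1 - j) * q ^ (k - (N + 1)) := by
    intro j hj k hk
    simp only [Finset.mem_Icc] at hj hk
    have hjN : (j : ℝ) ≤ N := by exact_mod_cast hj.2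
    have hkN : (N : ℝ) + 1 ≤ k := by exact_mod_cast hk.1
    have hxj : x j ≤ xbar := hleft j (Finset.mem_Icc.mpr hj)
    have hxk : xbar ≤ x k := hright k (Finset.mem_Icc.mpr hk)
    have hdj := hdist j (Finset.mem_Icc.mpr ⟨hj.1, le_trans hj.2 (Nat.le_add_right N M)⟩)
    have hdk := hdist k (Finset.mem_Icc.mpr ⟨by omega, hk.2⟩)
    rw [abs_of_nonpos (by linarith : (j : ℝ) - N - 1/2 ≤ 0)] at hdj
    rw [abs_of_nonpos (by linarith : x j - xbar ≤ 0)] at hdj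
    rw [abs_of_nonneg (by linarith : (0:ℝ) ≤ (k : ℝ) - N - 1/2)] at hdk
    rw [abs_of_nonneg (by linarith : (0:ℝ) ≤ x k - xbar)] at hdk
    have hd : ((k : ℝ) - j) * ((p : ℝ) * γ) / 2 ≤ |x j - x k| := by
      rw [abs_of_nonpos (by linarith : x j - x k ≤ 0)]
      linarith
    have hlog : Real.log (1 + Real.exp (-γ * |x j - x k|)) ≤ Real.exp (-γ * |x j - x k|) := by
      have h := Real.log_le_sub_one_of_pos
        (by positivity : (0:ℝ) < 1 + Real.exp (-γ * |x j - x k|))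
      linarith
    have hexp : Real.exp (-γ * |x j - x k|) ≤ q ^ (k - j) := by
      have hkj : ((k - j : ℕ) : ℝ) = (k : ℝ) - j := by
        have : j ≤ k := le_trans hj.2 (by omega)
        push_cast [Nat.cast_sub this]; ring
      rw [hqdef, ← Real.exp_nat_mul, Real.exp_le_exp, hkj]
      have hγ2 : 0 < (p : ℝ) * γ := by positivity
      calc -γ * |x j - x k| ≤ -γ * (((k : ℝ) - j) * ((p : ℝ) * γ) / 2) := by
            apply neg_le_neg at hd
            nlinarith [hd]
        _ = ((k : ℝ) - j) * (-((p : ℝ) * γ ^ 2) / 2) := by ring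
    have hsplit : k - j = (N + 1 - j) + (k - (N + 1)) := by omega
    rw [← pow_add, ← hsplit]
    exact hlog.trans hexp
  calc ∑ j ∈ Finset.Icc 1 N, ∑ k ∈ Finset.Icc (N + 1) (N + M),
        Real.log (1 + Real.exp (-γ * |x j - x k|))
      ≤ ∑ j ∈ Finset.Icc 1 N, ∑ k ∈ Finset.Icc (N + 1) (N + M),
          q ^ (N + 1 - j) * q ^ (k - (N + 1)) := by
        apply Finset.sum_le_sum
        intro j hj
        exact Finset.sum_le_sum (fun k hk => key j hj k hk)
    _ = (∑ j ∈ Finset.Icc 1 N, q ^ (N + 1 - j)) *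
        (∑ k ∈ Finset.Icc (N + 1) (N + M), q ^ (k - (N + 1))) := by
        rw [Finset.sum_mul_sum]
    _ ≤ (1 - q)⁻¹ * (1 - q)⁻¹ := by
        apply mul_le_mul _ _ (Finset.sum_nonneg fun k _ => by positivity)
          (by positivity)
        · have h1 : ∑ j ∈ Finset.Icc 1 N, q ^ (N + 1 - j)
              = ∑ i ∈ Finset.range N, q ^ (N - i) := by
            rw [← Finset.Ico_add_one_right_eq_Icc, Finset.sum_Ico_eq_sum_range]
            apply Finset.sum_congr (by congr 1)
            intro i hi
            congr 1
            omega
          rw [h1]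
          have h2 : ∑ i ∈ Finset.range N, q ^ (N - i)
              = ∑ i ∈ Finset.range N, q ^ (i + 1) := by
            rw [← Finset.sum_range_reflect (fun i => q ^ (i + 1)) N]
            apply Finset.sum_congr rfl
            intro i hi
            simp only [Finset.mem_range] at hi
            congr 1
            omega
          rw [h2]
          calc ∑ i ∈ Finset.range N, q ^ (i + 1)
              ≤ ∑ i ∈ Finset.range N, q ^ i := by
                apply Finset.sum_le_sum
                intro i _
                exact pow_le_pow_of_le_one hq0.le hq1.le (Nat.le_succ i)
            _ ≤ (1 - q)⁻¹ := geo_sum_aux hq0.le hq1 N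
        · have h1 : ∑ k ∈ Finset.Icc (N + 1) (N + M), q ^ (k - (N + 1))
              = ∑ i ∈ Finset.range M, q ^ i := by
            rw [← Finset.Ico_add_one_right_eq_Icc, Finset.sum_Ico_eq_sum_range]
            apply Finset.sum_congr (by congr 1; omega)
            intro i hi
            congr 1
            omega
          rw [h1]
          exact geo_sum_aux hq0.le hq1 M
    _ = ((1 - q) ^ 2)⁻¹ := by rw [sq, mul_inv]
end

section
/- Assume in addition that there is ε > 0 with u_k ≥ ε for every k ≥ 0, and for an integer d ≥ 1 set δ_d := sup_{k ≥ d} |u_k − 1/μ|. Then there is a constant C < ∞, depending only on ε and μ, such that for all integers d ≥ 1 and all N, r, s with d ≤ r ≤ s ≤ N − d: |u_N/(μ·u_r·u_{N−s}) − 1| ≤ C·δ_d. (Interpretation: if P_N is the renewal process on {0,…,N} conditioned to have renewal points at 0 and N, E is the event that r and s are renewal points with a prescribed renewal configuration in between, and P is the stationary renewal process with the same waiting-time distribution, then |P_N(E) − P(E)| ≤ C·P_N(E)·δ_d.) -/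
/-!
Put `α = u_N - 1/μ`, `β = u_r - 1/μ`, `γ = u_{N-s} - 1/μ`. Then
`u_N / (μ u_r u_{N-s}) - 1 = (α - β) / (μ u_r u_{N-s}) - γ / u_{N-s}`,
and each of `α, β, γ` is at most `δ_d` in absolute value because `N, r, N - s ≥ d`
(the supremum is a genuine one, not the junk value `0`, since `0 ≤ u_k ≤ 1`).
The denominators are at least `μ ε²` and `ε`, and `μ ≥ 1` since `q` lives on `n ≥ 1`.
-/

noncomputable section

/-- The renewal sequence `(u_N)` associated with the waiting-time distribution
`(q_n)_{n ≥ 1}`: `u_0 = 1` and `u_N = Σ_{n=1}^N q_n · u_{N-n}`. -/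
def renewalSeq (q : ℕ → ℝ) : ℕ → ℝ
  | 0 => 1
  | N + 1 => ∑ n ∈ Finset.range (N + 1), q (n + 1) * renewalSeq q (N - n)
  decreasing_by omega

section RenewalSeq

variable {q : ℕ → ℝ}

lemma renewalSeq_nonneg (hq : ∀ n, 0 ≤ q n) (N : ℕ) : 0 ≤ renewalSeq q N := by
  induction N using Nat.strong_induction_on with
  | _ N ih =>
    match N with
    | 0 => simp [renewalSeq]
    | N + 1 =>
      rw [renewalSeq]
      exact Finset.sum_nonneg fun n _ => mul_nonneg (hq _) (ih _ (by omega))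

lemma renewalSeq_le_one (hq : ∀ n, 0 ≤ q n) (hs : HasSum q 1) (N : ℕ) :
    renewalSeq q N ≤ 1 := by
  induction N using Nat.strong_induction_on with
  | _ N ih =>
    match N with
    | 0 => simp [renewalSeq]
    | N + 1 =>
      rw [renewalSeq]
      calc ∑ n ∈ Finset.range (N + 1), q (n + 1) * renewalSeq q (N - n)
          ≤ ∑ n ∈ Finset.range (N + 1), q (n + 1) :=
            Finset.sum_le_sum fun n _ => mul_le_of_le_one_right (hq _) (ih _ (by omega))
        _ ≤ ∑ n ∈ Finset.range (N + 2), q n := by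
            rw [Finset.sum_range_succ' q (N + 1)]
            exact le_add_of_nonneg_right (hq 0)
        _ ≤ 1 := sum_le_hasSum _ (fun i _ => hq i) hs

lemma bddAbove_range_abs_renewalSeq_sub (hq : ∀ n, 0 ≤ q n) (hs : HasSum q 1) (c : ℝ) :
    BddAbove (Set.range fun k => |renewalSeq q k - c|) := by
  refine ⟨1 + |c|, ?_⟩
  rintro _ ⟨k, rfl⟩
  calc |renewalSeq q k - c| ≤ |renewalSeq q k| + |c| := abs_sub _ _
    _ ≤ 1 + |c| := by
        rw [abs_of_nonneg (renewalSeq_nonneg hq k)]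
        gcongr
        exact renewalSeq_le_one hq hs k

end RenewalSeq

lemma one_le_tsum_mul_of_hasSum_one {q : ℕ → ℝ} (h0 : q 0 = 0) (hq : ∀ n, 0 ≤ q n)
    (hs : HasSum q 1) (hmean : Summable fun n : ℕ => (n : ℝ) * q n) :
    1 ≤ ∑' n : ℕ, (n : ℝ) * q n := by
  rw [← hs.tsum_eq]
  refine Summable.tsum_le_tsum (fun n => ?_) hs.summable hmean
  rcases n with _ | n
  · simp [h0]
  · exact le_mul_of_one_le_left (hq _) (by simp)

lemma le_iSup_tail {f : ℕ → ℝ} (hf : BddAbove (Set.range f)) {d k : ℕ} (hk : d ≤ k) :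
    f k ≤ ⨆ k : {k : ℕ // d ≤ k}, f k :=
  le_ciSup (f := fun k : {k : ℕ // d ≤ k} => f k)
    (hf.mono (Set.range_comp_subset_range Subtype.val f)) ⟨k, hk⟩

lemma abs_div_mul_mul_sub_one_le {μ ε δ a b c : ℝ} (hμ : 0 < μ) (hε : 0 < ε)
    (hb : ε ≤ b) (hc : ε ≤ c) (ha' : |a - 1 / μ| ≤ δ) (hb' : |b - 1 / μ| ≤ δ)
    (hc' : |c - 1 / μ| ≤ δ) :
    |a / (μ * b * c) - 1| ≤ (2 / (μ * ε ^ 2) + 1 / ε) * δ := by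
  have hδ : 0 ≤ δ := (abs_nonneg _).trans ha'
  have hb0 : 0 < b := hε.trans_le hb
  have hc0 : 0 < c := hε.trans_le hc
  have hden : μ * ε ^ 2 ≤ μ * b * c := by
    rw [mul_assoc, sq]
    exact mul_le_mul_of_nonneg_left (mul_le_mul hb hc hε.le hb0.le) hμ.le
  have hden0 : 0 < μ * ε ^ 2 := by positivity
  have key : a / (μ * b * c) - 1
      = (a - 1 / μ) / (μ * b * c) - (b - 1 / μ) / (μ * b * c) - (c - 1 / μ) / c := by
    field_simp
    ring
  rw [key]
  calc _ ≤ |(a - 1 / μ) / (μ * b * c)| + |(b - 1 / μ) / (μ * b * c)| + |(c - 1 / μ) / c| :=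
        (abs_sub _ _).trans (add_le_add_left (abs_sub _ _) _)
    _ ≤ δ / (μ * ε ^ 2) + δ / (μ * ε ^ 2) + δ / ε := by
        simp only [abs_div, abs_of_pos (hden0.trans_le hden), abs_of_pos hc0]
        gcongr
    _ = (2 / (μ * ε ^ 2) + 1 / ε) * δ := by ring

/-- Convergence of the conditioned renewal process to the stationary one:
if `u_k ≥ ε > 0` for all `k` and `δ_d = sup_{k ≥ d} |u_k - 1/μ|`, then
`|u_N/(μ·u_r·u_{N-s}) - 1| ≤ C·δ_d` for all `d ≤ r ≤ s ≤ N - d`, with `C`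
depending only on `ε` and `μ`. -/
theorem renewal_conditioned_vs_stationary (ε μ : ℝ) (hε : 0 < ε) :
    ∃ C : ℝ, ∀ q : ℕ → ℝ, q 0 = 0 → (∀ n, 0 ≤ q n) → HasSum q 1 →
      Summable (fun n : ℕ => (n : ℝ) * q n) → (∑' n : ℕ, (n : ℝ) * q n) = μ →
      (∀ k, ε ≤ renewalSeq q k) →
      ∀ d : ℕ, 1 ≤ d → ∀ N r s : ℕ, d ≤ r → r ≤ s → s + d ≤ N →
        |renewalSeq q N / (μ * renewalSeq q r * renewalSeq q (N - s)) - 1|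
          ≤ C * ⨆ k : {k : ℕ // d ≤ k}, |renewalSeq q (k : ℕ) - 1 / μ| := by
  refine ⟨2 / (μ * ε ^ 2) + 1 / ε, ?_⟩
  intro q h0 hq hs hmean hμ hεu d _ N r s hdr _ hsN
  have hμ0 : 0 < μ := hμ ▸ one_pos.trans_le (one_le_tsum_mul_of_hasSum_one h0 hq hs hmean)
  have htail : ∀ k, d ≤ k →
      |renewalSeq q k - 1 / μ| ≤ ⨆ k : {k : ℕ // d ≤ k}, |renewalSeq q (k : ℕ) - 1 / μ| :=
    fun k hk => le_iSup_tail (bddAbove_range_abs_renewalSeq_sub hq hs _) hk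
  exact abs_div_mul_mul_sub_one_le hμ0 hε (hεu r) (hεu (N - s))
    (htail N (by omega)) (htail r hdr) (htail (N - s) (by omega))
end
end

section
/- Assume u_k ≥ 1/c for all k ≥ 0, for some constant c ≥ 1. For N ≥ 1 let Q_N be the probability measure on the set of compositions (n_1,…,n_D) of N into positive integer parts given by Q_N((n_1,…,n_D)) := p_{n_1}⋯p_{n_D}/u_N. Then for every integer d ≥ 1 and all integers 1 ≤ a ≤ b ≤ N with b − a ≥ d: Q_N({(n_1,…,n_D) : no partial sum n_1 + ⋯ + n_i (0 ≤ i ≤ D) lies in {a, a+1, …, b−1}}) ≤ c·Σ_{k ≥ d} k·p_k. -/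
noncomputable section

/-!
A composition of `N` avoiding `{a, …, b-1}` has a part jumping over the interval: it reads
`l₁ ++ (t - s) :: l₂` with `l₁` a composition of some `s < a` and `l₂` one of `N - t` for some
`t ≥ b`. The total weight of the compositions of any `m` is at most `1`, so summing over `(s, t)`
bounds the weight of the avoiding compositions by `Σ_{s < a ≤ b ≤ t} q (t - s)`, and each
difference `k = t - s ≥ d` occurs for at most `k` pairs. Dividing by `u_N ≥ 1/c` gives the claim.
-/

open Finset

theorem List.exists_eq_append_cons_of_forall_take_sum :
    ∀ (l : List ℕ) {a b : ℕ}, 0 < a → a ≤ l.sum →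
      (∀ i, (l.take i).sum < a ∨ b ≤ (l.take i).sum) →
      ∃ l₁ x l₂, l = l₁ ++ x :: l₂ ∧ l₁.sum < a ∧ b ≤ l₁.sum + x
  | [], _, _, ha, hal, _ => by simp at hal; omega
  | y :: l, a, b, ha, hal, h => by
    by_cases hy : a ≤ y
    · have := h 1
      exact ⟨[], y, l, rfl, by simpa using ha, by simp at this ⊢; omega⟩
    · obtain ⟨l₁, x, l₂, rfl, h₁, h₂⟩ :=
        l.exists_eq_append_cons_of_forall_take_sum (a := a - y) (b := b - y) (by omega)
          (by simp at hal; omega) fun i => by have := h (i + 1); simp at this; omega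
      exact ⟨y :: l₁, x, l₂, rfl, by simp; omega, by simp; omega⟩

namespace Renewal

def compositions : ℕ → Finset (List ℕ)
  | 0 => {[]}
  | m + 1 => (range (m + 1)).biUnion fun n => (compositions (m - n)).image ((n + 1) :: ·)
  decreasing_by omega

theorem mem_compositions_sum : ∀ {l : List ℕ}, (∀ x ∈ l, 0 < x) → l ∈ compositions l.sum
  | [], _ => by simp [compositions]
  | x :: l, hpos => by
    obtain ⟨n, rfl⟩ := Nat.exists_eq_add_one_of_ne_zero (hpos x List.mem_cons_self).ne'
    have hl : l ∈ compositions l.sum :=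
      mem_compositions_sum fun y hy => hpos y (List.mem_cons_of_mem _ hy)
    rw [List.sum_cons, show n + 1 + l.sum = n + l.sum + 1 by omega, compositions]
    exact mem_biUnion.2 ⟨n, mem_range.2 (by omega), mem_image.2 ⟨l, by simpa using hl, rfl⟩⟩

variable {q : ℕ → ℝ}

def weight (q : ℕ → ℝ) (l : List ℕ) : ℝ := (l.map q).prod

theorem weight_nonneg (hq : ∀ n, 0 ≤ q n) (l : List ℕ) : 0 ≤ weight q l :=
  List.prod_nonneg fun _ hx => by
    obtain ⟨y, _, rfl⟩ := List.mem_map.1 hx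
    exact hq y

theorem sum_weight_compositions_succ (q : ℕ → ℝ) (m : ℕ) :
    ∑ l ∈ compositions (m + 1), weight q l =
      ∑ n ∈ range (m + 1), q (n + 1) * ∑ l ∈ compositions (m - n), weight q l := by
  rw [compositions, sum_biUnion]
  · refine sum_congr rfl fun n _ => ?_
    rw [sum_image fun _ _ _ _ h => List.cons_injective h, mul_sum]
    simp [weight]
  · intro i _ j _ hij
    simp only [Function.onFun, disjoint_left, mem_image]
    rintro _ ⟨l, _, rfl⟩ ⟨l', _, h⟩
    exact hij (by simpa using (List.cons.inj h).1.symm)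

theorem sum_weight_compositions_le_one (hq : ∀ n, 0 ≤ q n) (h1 : HasSum q 1) (m : ℕ) :
    ∑ l ∈ compositions m, weight q l ≤ 1 := by
  induction m using Nat.strong_induction_on with
  | _ m ih =>
  cases m with
  | zero => simp [compositions, weight]
  | succ m =>
    rw [sum_weight_compositions_succ]
    calc _ ≤ ∑ n ∈ range (m + 1), q (n + 1) :=
          sum_le_sum fun n _ => mul_le_of_le_one_right (hq _) (ih _ (by omega))
      _ = ∑ n ∈ (range (m + 1)).map (addRightEmbedding 1), q n := by rw [sum_map]; rfl
      _ ≤ 1 := sum_le_hasSum _ (fun n _ => hq n) h1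

theorem sum_weight_le_of_forall_take_sum (hq : ∀ n, 0 ≤ q n) (h1 : HasSum q 1) {N a b : ℕ}
    (ha : 0 < a) (haN : a ≤ N) (L : Finset (List ℕ))
    (hL : ∀ l ∈ L, (∀ x ∈ l, 0 < x) ∧ l.sum = N ∧
      ∀ i, (l.take i).sum < a ∨ b ≤ (l.take i).sum) :
    ∑ l ∈ L, weight q l ≤ ∑ st ∈ range a ×ˢ Icc b N, q (st.2 - st.1) := by
  set D := (range a ×ˢ Icc b N).sigma fun st => compositions st.1 ×ˢ compositions (N - st.2)
  let glue : (Σ _ : ℕ × ℕ, List ℕ × List ℕ) → List ℕ := fun y => y.2.1 ++ (y.1.2 - y.1.1) :: y.2.2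
  have hLD : L ⊆ D.image glue := by
    intro l hl
    obtain ⟨hpos, rfl, hav⟩ := hL l hl
    obtain ⟨l₁, x, l₂, rfl, h₁, h₂⟩ := l.exists_eq_append_cons_of_forall_take_sum ha haN hav
    simp only [List.mem_append, List.mem_cons] at hpos
    have hl₁ := mem_compositions_sum fun y hy => hpos y (.inl hy)
    have hl₂ := mem_compositions_sum fun y hy => hpos y (.inr (.inr hy))
    refine mem_image.2 ⟨⟨(l₁.sum, l₁.sum + x), (l₁, l₂)⟩, ?_, by simp [glue]⟩
    simp only [D, mem_sigma, mem_product, mem_range, mem_Icc, List.sum_append, List.sum_cons]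
    refine ⟨⟨h₁, h₂, by omega⟩, hl₁, ?_⟩
    rwa [show l₁.sum + (x + l₂.sum) - (l₁.sum + x) = l₂.sum by omega]
  calc ∑ l ∈ L, weight q l ≤ ∑ l ∈ D.image glue, weight q l :=
        sum_le_sum_of_subset_of_nonneg hLD fun _ _ _ => weight_nonneg hq _
    _ ≤ ∑ y ∈ D, weight q (glue y) := sum_image_le_of_nonneg fun _ _ => weight_nonneg hq _
    _ = ∑ st ∈ range a ×ˢ Icc b N, q (st.2 - st.1) * ((∑ l ∈ compositions st.1, weight q l) *
          ∑ l ∈ compositions (N - st.2), weight q l) := by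
        rw [sum_sigma]
        refine sum_congr rfl fun st _ => ?_
        rw [sum_mul_sum, sum_product, mul_sum]
        refine sum_congr rfl fun l₁ _ => ?_
        rw [mul_sum]
        refine sum_congr rfl fun l₂ _ => ?_
        simp only [glue, weight, List.map_append, List.map_cons, List.prod_append, List.prod_cons]
        ring
    _ ≤ ∑ st ∈ range a ×ˢ Icc b N, q (st.2 - st.1) :=
        sum_le_sum fun st _ => mul_le_of_le_one_right (hq _) <|
          mul_le_one₀ (sum_weight_compositions_le_one hq h1 _)
            (sum_nonneg fun _ _ => weight_nonneg hq _) (sum_weight_compositions_le_one hq h1 _)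

end Renewal

theorem sum_range_prod_Icc_sub_le {q : ℕ → ℝ} (hq : ∀ n, 0 ≤ q n) {a b d N : ℕ}
    (hab : a + d ≤ b) :
    ∑ st ∈ range a ×ˢ Icc b N, q (st.2 - st.1) ≤ ∑ k ∈ Icc d N, (k : ℝ) * q k := by
  have hmaps : ∀ st ∈ range a ×ˢ Icc b N, st.2 - st.1 ∈ Icc d N := by
    intro st hst
    simp only [mem_product, mem_range, mem_Icc] at hst ⊢
    omega
  rw [← sum_fiberwise_of_maps_to hmaps]
  refine sum_le_sum fun k _ => ?_
  rw [sum_congr rfl fun st hst => by rw [(mem_filter.1 hst).2], sum_const, nsmul_eq_mul]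
  gcongr
  · exact hq k
  calc #{st ∈ range a ×ˢ Icc b N | st.2 - st.1 = k} ≤ #(Ico (b - k) a) := by
        refine card_le_card_of_injOn Prod.fst (fun st hst => ?_) fun st hst st' hst' h => ?_
        · simp only [coe_filter, mem_product, mem_range, mem_Icc, Set.mem_ofPred_eq] at hst
          simp only [coe_Ico, Set.mem_Ico]
          omega
        · simp only [coe_filter, mem_product, mem_range, mem_Icc, Set.mem_ofPred_eq] at hst hst'
          exact Prod.ext h (by omega)
    _ ≤ k := by simp only [Nat.card_Ico]; omega

theorem renewal_long_intervals_unlikely_general (q : ℕ → ℝ)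
    (hq : ∀ n, 0 ≤ q n) (h1 : HasSum q 1)
    (hμ : Summable (fun n : ℕ => (n : ℝ) * q n))
    (c : ℝ) (hc : 1 ≤ c) (hu : ∀ k, 1 / c ≤ renewalSeq q k)
    (N : ℕ) (d : ℕ)
    (a b : ℕ) (ha : 1 ≤ a) (hab : a + d ≤ b) (hbN : b ≤ N) :
    (∑' l : {l : List ℕ // (∀ x ∈ l, 0 < x) ∧ l.sum = N ∧
        ∀ i : ℕ, (l.take i).sum < a ∨ b ≤ (l.take i).sum},
      ((l : List ℕ).map q).prod / renewalSeq q N)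
      ≤ c * ∑' k : ℕ, (if d ≤ k then (k : ℝ) * q k else 0) := by
  have hc0 : 0 < c := by linarith
  have hinv : 1 / renewalSeq q N ≤ c :=
    (one_div_le ((one_div_pos.2 hc0).trans_le (hu N)) hc0).2 (hu N)
  have htail_nonneg : ∀ k, 0 ≤ if d ≤ k then (k : ℝ) * q k else 0 := fun k => by
    split_ifs <;> positivity [hq k]
  have htail : Summable fun k : ℕ => if d ≤ k then (k : ℝ) * q k else 0 :=
    hμ.of_nonneg_of_le htail_nonneg fun k => by
      split_ifs
      exacts [le_rfl, mul_nonneg k.cast_nonneg (hq k)]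
  refine tsum_le_of_sum_le' (mul_nonneg hc0.le (tsum_nonneg htail_nonneg)) fun L => ?_
  rw [← sum_div, div_eq_mul_one_div, mul_comm]
  refine mul_le_mul hinv ?_ (sum_nonneg fun l _ => Renewal.weight_nonneg hq l) hc0.le
  calc ∑ l ∈ L, ((l : List ℕ).map q).prod = ∑ l ∈ L.map (.subtype _), Renewal.weight q l := by
        rw [sum_map]; rfl
    _ ≤ ∑ st ∈ range a ×ˢ Icc b N, q (st.2 - st.1) :=
        Renewal.sum_weight_le_of_forall_take_sum hq h1 ha (by omega) _ <| by
          simpa using fun l hpos hsum hav _ => ⟨hpos, hsum, hav⟩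
    _ ≤ ∑ k ∈ Icc d N, (k : ℝ) * q k := sum_range_prod_Icc_sub_le hq hab
    _ ≤ ∑' k : ℕ, (if d ≤ k then (k : ℝ) * q k else 0) := by
        rw [sum_congr rfl fun k hk => (if_pos (mem_Icc.1 hk).1).symm]
        exact htail.sum_le_tsum _ fun k _ => htail_nonneg k

/-- Long intervals are unlikely for the conditioned renewal process: the
`Q_N`-probability that no renewal point (partial sum of the composition) lies in
`{a, …, b-1}` is at most `c·Σ_{k ≥ d} k·q_k`, whenever `b - a ≥ d`. -/
theorem renewal_long_intervals_unlikely (q : ℕ → ℝ) (hq0 : q 0 = 0)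
    (hq : ∀ n, 0 ≤ q n) (h1 : HasSum q 1)
    (hμ : Summable (fun n : ℕ => (n : ℝ) * q n))
    (c : ℝ) (hc : 1 ≤ c) (hu : ∀ k, 1 / c ≤ renewalSeq q k)
    (N : ℕ) (hN : 1 ≤ N) (d : ℕ) (hd : 1 ≤ d)
    (a b : ℕ) (ha : 1 ≤ a) (hab : a + d ≤ b) (hbN : b ≤ N) :
    (∑' l : {l : List ℕ // (∀ x ∈ l, 0 < x) ∧ l.sum = N ∧
        ∀ i : ℕ, (l.take i).sum < a ∨ b ≤ (l.take i).sum},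
      ((l : List ℕ).map q).prod / renewalSeq q N)
      ≤ c * ∑' k : ℕ, (if d ≤ k then (k : ℝ) * q k else 0) :=
  renewal_long_intervals_unlikely_general q hq h1 hμ c hc hu N d a b ha hab hbN
end
end

section
/- Let p ≥ 1 be an integer, let n, n' : ℕ → ℕ be finitely supported occupation-number sequences with n' admissible, and let α ≤ β be nonnegative integers such that: n_j = n'_j for all j with pα ≤ j < pβ; Σ_{j<pα} n_j = Σ_{j<pα} n'_j; and Σ_{j<pα} j·n_j ≥ Σ_{j<pα} j·n'_j. Then for every integer k with α ≤ k ≤ β: if pk is a renewal point of n, then pk is also a renewal point of n'. -/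
/-- `pk` is a renewal point of the occupation-number sequence `n`:
`Σ_{j<pk} n_j = k` and `Σ_{j<pk} j·n_j = p·k(k-1)/2`. -/
def IsRenewalPt (p : ℕ) (n : ℕ → ℕ) (k : ℕ) : Prop :=
  (∑ j ∈ Finset.range (p * k), n j) = k ∧
    2 * ∑ j ∈ Finset.range (p * k), j * n j = p * k * (k - 1)

/-- The occupation-number sequence `n` is admissible: whenever
`Σ_{j<pk} n_j = k`, also `Σ_{j<pk} j·n_j ≥ p·k(k-1)/2`. -/
def AdmissibleOcc (p : ℕ) (n : ℕ → ℕ) : Prop :=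
  ∀ k : ℕ, 1 ≤ k → (∑ j ∈ Finset.range (p * k), n j) = k →
    p * k * (k - 1) ≤ 2 * ∑ j ∈ Finset.range (p * k), j * n j

/-!
Admissibility of `n'` gives the lower bound `p·k(k-1)/2` on its first moment up to `pk` as soon
as it has `k` particles there, so it suffices to compare `n'` with `n` on `[0, pk)`. On `[0, pα)`
both have the same number of particles and `n'` has the smaller moment; on `[pα, pk)` they
coincide. Hence `n'` has `k` particles below `pk` and moment at most that of `n`, which equals
`p·k(k-1)/2` at a renewal point of `n`.
-/

open Finset

section RangeComparison

variable {M : Type*} [AddCommMonoid M] {f g : ℕ → M} {a b : ℕ}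

theorem sum_range_eq_of_eqOn_Ico
    (hab : a ≤ b) (hfg : ∀ j ∈ Ico a b, f j = g j)
    (h : ∑ j ∈ range a, f j = ∑ j ∈ range a, g j) :
    ∑ j ∈ range b, f j = ∑ j ∈ range b, g j := by
  rw [← sum_range_add_sum_Ico f hab, ← sum_range_add_sum_Ico g hab, h, sum_congr rfl hfg]

theorem sum_range_le_of_eqOn_Ico [PartialOrder M] [IsOrderedAddMonoid M]
    (hab : a ≤ b) (hfg : ∀ j ∈ Ico a b, f j = g j)
    (h : ∑ j ∈ range a, f j ≤ ∑ j ∈ range a, g j) :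
    ∑ j ∈ range b, f j ≤ ∑ j ∈ range b, g j := by
  rw [← sum_range_add_sum_Ico f hab, ← sum_range_add_sum_Ico g hab, sum_congr rfl hfg]
  exact add_le_add_left h _

end RangeComparison

theorem AdmissibleOcc.isRenewalPt_of_moment_le {p : ℕ} {n : ℕ → ℕ} (hadm : AdmissibleOcc p n)
    {k : ℕ} (hcount : ∑ j ∈ range (p * k), n j = k)
    (hmom : 2 * ∑ j ∈ range (p * k), j * n j ≤ p * k * (k - 1)) :
    IsRenewalPt p n k := by
  refine ⟨hcount, ?_⟩
  rcases Nat.eq_zero_or_pos k with rfl | hk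
  · simp
  · exact le_antisymm hmom (hadm k hk hcount)

theorem renewal_point_transfer_general (p : ℕ) (n n' : ℕ → ℕ)
    (hadm' : AdmissibleOcc p n') (α β : ℕ)
    (heq : ∀ j, p * α ≤ j → j < p * β → n j = n' j)
    (hnum : ∑ j ∈ Finset.range (p * α), n j = ∑ j ∈ Finset.range (p * α), n' j)
    (hmom : ∑ j ∈ Finset.range (p * α), j * n' j ≤
      ∑ j ∈ Finset.range (p * α), j * n j)
    (k : ℕ) (hk1 : α ≤ k) (hk2 : k ≤ β) (hren : IsRenewalPt p n k) :
    IsRenewalPt p n' k := by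
  obtain ⟨hcount, hmoment⟩ := hren
  have hpαk : p * α ≤ p * k := Nat.mul_le_mul_left p hk1
  have hagree : ∀ j ∈ Ico (p * α) (p * k), n' j = n j := fun j hj =>
    (heq j (mem_Ico.1 hj).1 ((mem_Ico.1 hj).2.trans_le (Nat.mul_le_mul_left p hk2))).symm
  have hcount' : ∑ j ∈ range (p * k), n' j = k :=
    (sum_range_eq_of_eqOn_Ico hpαk hagree hnum.symm).trans hcount
  have hmoment_le : ∑ j ∈ range (p * k), j * n' j ≤ ∑ j ∈ range (p * k), j * n j :=
    sum_range_le_of_eqOn_Ico hpαk (fun j hj => by rw [hagree j hj]) hmom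
  exact hadm'.isRenewalPt_of_moment_le hcount' (hmoment ▸ Nat.mul_le_mul_left 2 hmoment_le)

/-- If `n` and `n'` coincide on `{pα, …, pβ-1}`, have the same number of
particles to the left of `pα`, with the first moment of `n` dominating that of
`n'` there, and `n'` is admissible, then every renewal point `pk` of `n` with
`α ≤ k ≤ β` is a renewal point of `n'` as well. -/
theorem renewal_point_transfer (p : ℕ) (hp : 1 ≤ p) (n n' : ℕ → ℕ)
    (hfin : (Function.support n).Finite) (hfin' : (Function.support n').Finite)
    (hadm' : AdmissibleOcc p n') (α β : ℕ) (hαβ : α ≤ β)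
    (heq : ∀ j, p * α ≤ j → j < p * β → n j = n' j)
    (hnum : ∑ j ∈ Finset.range (p * α), n j = ∑ j ∈ Finset.range (p * α), n' j)
    (hmom : ∑ j ∈ Finset.range (p * α), j * n' j ≤
      ∑ j ∈ Finset.range (p * α), j * n j)
    (k : ℕ) (hk1 : α ≤ k) (hk2 : k ≤ β) (hren : IsRenewalPt p n k) :
    IsRenewalPt p n' k :=
  renewal_point_transfer_general p n n' hadm' α β heq hnum hmom k hk1 hk2 hren
end
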